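/- arXiv:2012.07972 — 2 statements merged into one kernel-verified Lean document; each statement's English description precedes it below -/
import Mathlib

section
/- Let V be a d-dimensional vector space over a non-Archimedean field and let N be an ultrametric norm on V diagonalized by a basis (s₁,…,s_d). Then the induced determinant norm det N on the one-dimensional space Λ^d V satisfies det N(s₁ ∧ ⋯ ∧ s_d) = ∏ᵢ N(sᵢ). -/
/-- The ultrametric norm on `V` diagonalized by the basis `b`, with values `w i` on the
basis vectors. -/
noncomputable def diagNorm {K V ι : Type*} [NontriviallyNormedField K]
    [AddCommGroup V] [Module K V] [Fintype ι] [Nonempty ι]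
    (b : Module.Basis ι K V) (w : ι → ℝ) (v : V) : ℝ :=
  Finset.univ.sup' Finset.univ_nonempty fun i => ‖b.repr v i‖ * w i

/-!
Evaluating the determinant `det_s` on both sides of `s₁ ∧ ⋯ ∧ s_d = ∑ᵢ v₁ⁱ ∧ ⋯ ∧ v_dⁱ` gives
`1 = ∑ᵢ det_s (vⁱ)`, so by the ultrametric inequality some `‖det_s (vⁱ)‖ ≥ 1`. Expanding that
determinant by the Leibniz formula, the ultrametric inequality again bounds it by a single term
`∏ₖ ‖(vₖⁱ)_{σ k}‖`, and `‖(vₖⁱ)_{σ k}‖ · w_{σ k} ≤ N(vₖⁱ)`. Hence every decomposition costs at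
least `∏ₖ w_k = ∏ₖ N(s_k)`, which the trivial decomposition attains.
-/

open ExteriorAlgebra

theorem Matrix.exists_perm_norm_det_le_prod {R ι : Type*} [NormedCommRing R]
    [NormOneClass R] [IsUltrametricDist R] [Fintype ι] [DecidableEq ι] (A : Matrix ι ι R) :
    ∃ σ : Equiv.Perm ι, ‖A.det‖ ≤ ∏ i, ‖A (σ i) i‖ := by
  obtain ⟨σ, -, hσ⟩ := IsUltrametricDist.exists_norm_finsetSum_le_of_nonempty
    Finset.univ_nonempty fun σ : Equiv.Perm ι => Equiv.Perm.sign σ • ∏ i, A (σ i) i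
  refine ⟨σ, ?_⟩
  rw [Matrix.det_apply]
  refine hσ.trans ?_
  rcases Int.units_eq_one_or (Equiv.Perm.sign σ) with h | h <;>
    simpa [h] using Finset.norm_prod_le Finset.univ fun i => A (σ i) i

section diagNorm

variable {K V ι : Type*} [NontriviallyNormedField K] [AddCommGroup V] [Module K V]
  [Fintype ι] [Nonempty ι] (b : Module.Basis ι K V) {w : ι → ℝ}

theorem norm_repr_mul_le_diagNorm (w : ι → ℝ) (v : V) (i : ι) :
    ‖b.repr v i‖ * w i ≤ diagNorm b w v :=
  Finset.le_sup' (fun i => ‖b.repr v i‖ * w i) (Finset.mem_univ i)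

theorem diagNorm_basis (hw : ∀ i, 0 ≤ w i) (k : ι) : diagNorm b w (b k) = w k := by
  apply le_antisymm
  · refine Finset.sup'_le _ _ fun i _ => ?_
    rcases eq_or_ne i k with rfl | h
    · simp
    · simp [Module.Basis.repr_self, Finsupp.single_eq_of_ne h, hw k]
  · simpa using norm_repr_mul_le_diagNorm b w (b k) k

theorem norm_det_mul_prod_le_prod_diagNorm [IsUltrametricDist K] [DecidableEq ι]
    (hw : ∀ i, 0 ≤ w i) (v : ι → V) :
    ‖b.det v‖ * ∏ k, w k ≤ ∏ k, diagNorm b w (v k) := by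
  obtain ⟨σ, hσ⟩ := (b.toMatrix v).exists_perm_norm_det_le_prod
  calc ‖b.det v‖ * ∏ k, w k
      ≤ (∏ k, ‖b.repr (v k) (σ k)‖) * ∏ k, w (σ k) := by
        rw [Module.Basis.det_apply, Equiv.prod_comp σ w]
        exact mul_le_mul_of_nonneg_right hσ (Finset.prod_nonneg fun k _ => hw k)
    _ = ∏ k, ‖b.repr (v k) (σ k)‖ * w (σ k) := Finset.prod_mul_distrib.symm
    _ ≤ ∏ k, diagNorm b w (v k) :=
        Finset.prod_le_prod (fun k _ => mul_nonneg (norm_nonneg _) (hw (σ k)))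
          fun k _ => norm_repr_mul_le_diagNorm b w (v k) (σ k)

end diagNorm

theorem AlternatingMap.map_eq_sum_of_ιMulti_eq_sum {R M N : Type*} [CommRing R]
    [AddCommGroup M] [Module R M] [AddCommGroup N] [Module R N] {d n : ℕ}
    (f : M [⋀^Fin d]→ₗ[R] N) {v : Fin d → M} {u : Fin n → Fin d → M}
    (h : ιMulti R d v = ∑ i, ιMulti R d (u i)) : f v = ∑ i, f (u i) := by
  classical
  let L := liftAlternating fun m => if hm : m = d then hm ▸ f else 0
  have hL : ∀ x, L (ιMulti R d x) = f x := fun x => by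
    simp [L, liftAlternating_apply_ιMulti]
  simpa [hL] using congrArg L h

theorem prod_le_iSup_prod_diagNorm_of_ιMulti_eq_sum {K V : Type*} [NontriviallyNormedField K]
    [IsUltrametricDist K] [AddCommGroup V] [Module K V] {d n : ℕ} [NeZero d]
    (b : Module.Basis (Fin d) K V) {w : Fin d → ℝ} (hw : ∀ i, 0 ≤ w i)
    {u : Fin n → Fin d → V} (h : ιMulti K d (fun k => b k) = ∑ i, ιMulti K d (u i)) :
    ∏ k, w k ≤ ⨆ i, ∏ k, diagNorm b w (u i k) := by
  have hdet : ∑ i, b.det (u i) = 1 := by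
    rw [← b.det.map_eq_sum_of_ιMulti_eq_sum h, Module.Basis.det_self]
  have hn : (Finset.univ : Finset (Fin n)).Nonempty := by
    by_contra hn
    simp [Finset.not_nonempty_iff_eq_empty.mp hn] at hdet
  obtain ⟨i, -, hi⟩ := IsUltrametricDist.exists_norm_finsetSum_le_of_nonempty hn
    fun i => b.det (u i)
  rw [hdet, norm_one] at hi
  calc ∏ k, w k ≤ ‖b.det (u i)‖ * ∏ k, w k :=
        le_mul_of_one_le_left (Finset.prod_nonneg fun k _ => hw k) hi
    _ ≤ ∏ k, diagNorm b w (u i k) := norm_det_mul_prod_le_prod_diagNorm b hw (u i)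
    _ ≤ ⨆ i, ∏ k, diagNorm b w (u i k) := 
        le_ciSup (f := fun i => ∏ k, diagNorm b w (u i k)) (Set.finite_range _).bddAbove i

/-- The determinant norm on the top exterior power: for a norm `N` diagonalized by a basis
`(s₁, …, s_d)`, the quotient norm induced on `Λᵈ V` (computed as the infimum, over all
decompositions of an element as a sum of pure wedges `∑ᵢ v₁ⁱ ∧ ⋯ ∧ v_dⁱ`, of
`maxᵢ ∏ₖ N(vₖⁱ)`) satisfies `det N (s₁ ∧ ⋯ ∧ s_d) = ∏ᵢ N(sᵢ)`. -/
theorem stmt_2 {K V : Type*} [NontriviallyNormedField K] [IsUltrametricDist K]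
    [AddCommGroup V] [Module K V] (d : ℕ) [NeZero d]
    (b : Module.Basis (Fin d) K V) (w : Fin d → ℝ) (hw : ∀ i, 0 < w i) :
    sInf { r : ℝ | ∃ (n : ℕ) (u : Fin n → Fin d → V),
        ((ExteriorAlgebra.ιMulti K d fun k => b k)
            = ∑ i, ExteriorAlgebra.ιMulti K d (u i)) ∧
          r = ⨆ i, ∏ k, diagNorm b w (u i k) }
      = ∏ k, diagNorm b w (b k) := by
  have hw₀ : ∀ i, 0 ≤ w i := fun i => (hw i).le
  refine IsLeast.csInf_eq ⟨⟨1, fun _ => b, by simp, by rw [ciSup_unique]⟩, ?_⟩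
  rintro r ⟨n, u, h, rfl⟩
  simpa only [diagNorm_basis b hw₀] using prod_le_iSup_prod_diagNorm_of_ιMulti_eq_sum b hw₀ h
end

section
/- Let N, N' be two ultrametric norms on a finite-dimensional vector space V over a non-Archimedean field and let N∨N' denote their pointwise maximum. Then N∨N' is again an ultrametric norm, N ≤ N∨N', N' ≤ N∨N', and d₁(N, N') = vol(N, N∨N') + vol(N', N∨N') where for comparable norms M ≤ M', vol(M, M') = d₁(M, M') ≥ 0. -/
/-- The pointwise maximum `N ∨ N'` of two ultrametric norms. -/
noncomputable def joinNorm {K V ι : Type*} [NontriviallyNormedField K]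
    [AddCommGroup V] [Module K V] [Fintype ι] [Nonempty ι]
    (b : Module.Basis ι K V) (w w' : ι → ℝ) (v : V) : ℝ :=
  max (diagNorm b w v) (diagNorm b w' v)

/-! Both norms are maxima of the coordinate functions `‖b.repr v i‖ * w i`, so the norm axioms
for the join follow coordinatewise from those of `‖·‖` on `K`. The `d₁` identity holds term by
term: for each `i` one of `log (max / w)` and `log (max / w')` vanishes and the other is
`|log (w' / w)|`. -/

namespace Real

theorem abs_log_div_eq_log_max_div_add_log_max_div {x y : ℝ} (hx : 0 < x) (hy : 0 < y) :
    |log (y / x)| = log (max x y / x) + log (max x y / y) := by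
  rcases le_total x y with h | h
  · rw [max_eq_right h, div_self hy.ne', log_one, add_zero,
      abs_of_nonneg (log_nonneg ((one_le_div hx).2 h))]
  · rw [max_eq_left h, div_self hx.ne', log_one, zero_add,
      abs_of_nonpos (log_nonpos (div_nonneg hy.le hx.le) ((div_le_one hx).2 h)), ← log_inv, inv_div]

end Real

section DiagNorm

variable {K V ι : Type*} [NontriviallyNormedField K] [AddCommGroup V] [Module K V]
  [Fintype ι] [Nonempty ι] (b : Module.Basis ι K V) {w : ι → ℝ}

theorem le_diagNorm (v : V) (i : ι) : ‖b.repr v i‖ * w i ≤ diagNorm b w v :=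
  Finset.le_sup' (fun i => ‖b.repr v i‖ * w i) (Finset.mem_univ i)

theorem diagNorm_nonneg (hw : ∀ i, 0 ≤ w i) (v : V) : 0 ≤ diagNorm b w v := by
  obtain ⟨i⟩ := ‹Nonempty ι›
  exact (mul_nonneg (norm_nonneg _) (hw i)).trans (le_diagNorm b v i)

theorem eq_zero_of_diagNorm_nonpos (hw : ∀ i, 0 < w i) {v : V} (h : diagNorm b w v ≤ 0) :
    v = 0 := by
  have hcoord : ∀ i, b.repr v i = 0 := fun i =>
    norm_le_zero_iff.mp <| nonpos_of_mul_nonpos_left ((le_diagNorm b v i).trans h) (hw i)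
  exact b.repr.map_eq_zero_iff.mp (Finsupp.ext hcoord)

theorem diagNorm_smul (w : ι → ℝ) (c : K) (v : V) :
    diagNorm b w (c • v) = ‖c‖ * diagNorm b w v := by
  simp only [diagNorm, map_smul, Finsupp.smul_apply, norm_smul, mul_assoc]
  exact (Finset.apply_sup'_eq_sup'_comp _ (‖c‖ * ·)
    fun x y => mul_max_of_nonneg x y (norm_nonneg c)).symm

theorem diagNorm_add_le_max [IsUltrametricDist K] (hw : ∀ i, 0 ≤ w i) (v u : V) :
    diagNorm b w (v + u) ≤ max (diagNorm b w v) (diagNorm b w u) := by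
  refine Finset.sup'_le _ _ fun i _ => ?_
  calc ‖b.repr (v + u) i‖ * w i
      ≤ max ‖b.repr v i‖ ‖b.repr u i‖ * w i := by
        rw [map_add, Finsupp.add_apply]
        exact mul_le_mul_of_nonneg_right (IsUltrametricDist.norm_add_le_max _ _) (hw i)
    _ = max (‖b.repr v i‖ * w i) (‖b.repr u i‖ * w i) := max_mul_of_nonneg _ _ (hw i)
    _ ≤ max (diagNorm b w v) (diagNorm b w u) :=
        max_le_max (le_diagNorm b v i) (le_diagNorm b u i)

end DiagNorm

section JoinNorm

variable {K V ι : Type*} [NontriviallyNormedField K] [AddCommGroup V] [Module K V]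
  [Fintype ι] [Nonempty ι] (b : Module.Basis ι K V) {w w' : ι → ℝ}

theorem joinNorm_nonneg (hw : ∀ i, 0 ≤ w i) (v : V) : 0 ≤ joinNorm b w w' v :=
  (diagNorm_nonneg b hw v).trans (le_max_left _ _)

theorem eq_zero_of_joinNorm_eq_zero (hw : ∀ i, 0 < w i) {v : V} (h : joinNorm b w w' v = 0) :
    v = 0 :=
  eq_zero_of_diagNorm_nonpos b hw (h ▸ le_max_left _ _)

theorem joinNorm_smul (w w' : ι → ℝ) (c : K) (v : V) :
    joinNorm b w w' (c • v) = ‖c‖ * joinNorm b w w' v := by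
  rw [joinNorm, joinNorm, diagNorm_smul, diagNorm_smul, mul_max_of_nonneg _ _ (norm_nonneg c)]

theorem joinNorm_add_le_max [IsUltrametricDist K] (hw : ∀ i, 0 ≤ w i) (hw' : ∀ i, 0 ≤ w' i)
    (v u : V) : joinNorm b w w' (v + u) ≤ max (joinNorm b w w' v) (joinNorm b w w' u) := by
  rw [joinNorm, joinNorm, joinNorm, max_max_max_comm]
  exact max_le_max (diagNorm_add_le_max b hw v u) (diagNorm_add_le_max b hw' v u)

end JoinNorm

/-- The join `N ∨ N'` of two ultrametric norms (codiagonalized by a basis, with weights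
`w, w'`) is again an ultrametric norm, with `N ≤ N∨N'` and `N' ≤ N∨N'`, and the `d₁`
distance decomposes as `d₁(N,N') = vol(N, N∨N') + vol(N', N∨N')`, where for comparable
norms `vol` is the (normalized) sum of the relative spectrum. -/
theorem stmt_18 {K V ι : Type*} [NontriviallyNormedField K] [IsUltrametricDist K]
    [AddCommGroup V] [Module K V] [Fintype ι] [Nonempty ι]
    (b : Module.Basis ι K V) (w w' : ι → ℝ) (hw : ∀ i, 0 < w i) (hw' : ∀ i, 0 < w' i) :
    (∀ v, 0 ≤ joinNorm b w w' v) ∧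
    (∀ v, joinNorm b w w' v = 0 → v = 0) ∧
    (∀ (c : K) (v : V), joinNorm b w w' (c • v) = ‖c‖ * joinNorm b w w' v) ∧
    (∀ v u : V, joinNorm b w w' (v + u) ≤ max (joinNorm b w w' v) (joinNorm b w w' u)) ∧
    (∀ v, diagNorm b w v ≤ joinNorm b w w' v) ∧
    (∀ v, diagNorm b w' v ≤ joinNorm b w w' v) ∧
    ((Fintype.card ι : ℝ)⁻¹ * ∑ i, |Real.log (w' i / w i)|
      = (Fintype.card ι : ℝ)⁻¹ * ∑ i, Real.log (max (w i) (w' i) / w i)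
        + (Fintype.card ι : ℝ)⁻¹ * ∑ i, Real.log (max (w i) (w' i) / w' i)) := by
  refine ⟨joinNorm_nonneg b fun i => (hw i).le, fun _ => eq_zero_of_joinNorm_eq_zero b hw,
    joinNorm_smul b w w', joinNorm_add_le_max b (fun i => (hw i).le) fun i => (hw' i).le,
    fun _ => le_max_left _ _, fun _ => le_max_right _ _, ?_⟩
  rw [← mul_add, ← Finset.sum_add_distrib]
  congr 1
  exact Finset.sum_congr rfl fun i _ =>
    Real.abs_log_div_eq_log_max_div_add_log_max_div (hw i) (hw' i)
end
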